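/- Proposition C.3 (regularity of the drift): Assume W satisfies the double-well assumptions and let q be the standing wave. Then the function s ↦ q''(s)/q'(s) is bounded on ℝ and Lipschitz continuous on ℝ. -/

import Mathlib

open Set Filter Topology

noncomputable section

def DoubleWell (W : ℝ → ℝ) : Prop :=
  ContDiff ℝ 3 W ∧
  (∀ u ∈ Set.Icc (-1:ℝ) 1, 0 ≤ W u) ∧
  W (-1) = 0 ∧ W 1 = 0 ∧
  (∀ u ∈ Set.Ioo (-1:ℝ) 1, 0 < W u) ∧
  deriv W (-1) = 0 ∧ deriv W 0 = 0 ∧ deriv W 1 = 0 ∧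
  (∀ u ∈ Set.Ioo (-1:ℝ) 0, 0 < deriv W u) ∧
  (∀ u ∈ Set.Ioo (0:ℝ) 1, deriv W u < 0) ∧
  0 < deriv (deriv W) (-1) ∧ 0 < deriv (deriv W) 1 ∧ deriv (deriv W) 0 < 0

def StandingWave (W q : ℝ → ℝ) : Prop :=
  ContDiff ℝ 2 q ∧ StrictMono q ∧ (∀ s, q s ∈ Set.Ioo (-1:ℝ) 1) ∧ q 0 = 0 ∧
  (∀ s, deriv (deriv q) s = deriv W (q s)) ∧
  Filter.Tendsto q Filter.atTop (nhds 1) ∧ Filter.Tendsto q Filter.atBot (nhds (-1))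

/-! The energy `q'² / 2 - W(q)` is conserved along the standing wave, and it vanishes along a
sequence `ξₙ → ∞` on which `q'(ξₙ) → 0` (mean value theorem on `[n, n + 1]`), so `q'² = 2 W(q)`
and `q' > 0`. Near a zero `a = ±1` of `W` with `W'(a) = 0 < W''(a)`, comparison of derivatives
gives `|W'(u)| ≲ |u - a|` and `W(u) ≳ (u - a)²`, while `W > 0` in between; hence `W'² ≤ C W`
on `[-1, 1]`. So the drift `q'' / q' = W'(q) / q'` has square `W'(q)² / (2 W(q)) ≤ C / 2`, and its
derivative `W''(q) - (q'' / q')²` is bounded, which gives the Lipschitz bound. -/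

theorem le_of_hasDerivAt_le_of_le_left {f f' g g' : ℝ → ℝ} {a b : ℝ}
    (hf : ∀ x, HasDerivAt f (f' x) x) (hg : ∀ x, HasDerivAt g (g' x) x) (ha : f a ≤ g a)
    (h : ∀ x ∈ Ico a b, f' x ≤ g' x) : ∀ x ∈ Icc a b, f x ≤ g x :=
  image_le_of_deriv_right_le_deriv_boundary
    (fun x _ => (hf x).continuousAt.continuousWithinAt) (fun x _ => (hf x).hasDerivWithinAt) ha
    (fun x _ => (hg x).continuousAt.continuousWithinAt) (fun x _ => (hg x).hasDerivWithinAt) h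

theorem sq_le_mul_of_second_deriv_mem_Icc {f f' f'' : ℝ → ℝ} {a b m M : ℝ}
    (hf : ∀ x, HasDerivAt f (f' x) x) (hf' : ∀ x, HasDerivAt f' (f'' x) x)
    (h0 : f a = 0) (h1 : f' a = 0) (hm : 0 < m) (hf'' : ∀ x ∈ Ico a b, f'' x ∈ Icc m M) :
    ∀ u ∈ Icc a b, f' u ^ 2 ≤ 2 * M ^ 2 / m * f u := by
  have hlin (c : ℝ) (x : ℝ) : HasDerivAt (fun x => c * (x - a)) c x := by
    simpa using ((hasDerivAt_id x).sub_const a).const_mul c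
  have hquad (x : ℝ) : HasDerivAt (fun x => m / 2 * (x - a) ^ 2) (m * (x - a)) x :=
    ((((hasDerivAt_id' x).sub_const a).pow 2).const_mul (m / 2)).congr_deriv (by ring)
  have f'_ge : ∀ u ∈ Icc a b, m * (u - a) ≤ f' u :=
    le_of_hasDerivAt_le_of_le_left (hlin m) hf' (by simp [h1]) fun x hx => (hf'' x hx).1
  have f'_le : ∀ u ∈ Icc a b, f' u ≤ M * (u - a) :=
    le_of_hasDerivAt_le_of_le_left hf' (hlin M) (by simp [h1]) fun x hx => (hf'' x hx).2
  have f_ge : ∀ u ∈ Icc a b, m / 2 * (u - a) ^ 2 ≤ f u :=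
    le_of_hasDerivAt_le_of_le_left hquad hf (by simp [h0])
      fun x hx => f'_ge x (Ico_subset_Icc_self hx)
  intro u hu
  have hua : 0 ≤ u - a := sub_nonneg.2 hu.1
  have hf'_nonneg : 0 ≤ f' u := (mul_nonneg hm.le hua).trans (f'_ge u hu)
  calc f' u ^ 2 ≤ (M * (u - a)) ^ 2 := pow_le_pow_left₀ hf'_nonneg (f'_le u hu) 2
    _ = 2 * M ^ 2 / m * (m / 2 * (u - a) ^ 2) := by field_simp
    _ ≤ 2 * M ^ 2 / m * f u := by gcongr; exact f_ge u hu

theorem exists_sq_le_mul_on_Icc_right {f f' f'' : ℝ → ℝ} {a : ℝ}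
    (hf : ∀ x, HasDerivAt f (f' x) x) (hf' : ∀ x, HasDerivAt f' (f'' x) x)
    (hc : ContinuousAt f'' a) (h0 : f a = 0) (h1 : f' a = 0) (h2 : 0 < f'' a) :
    ∃ b > a, ∃ C, ∀ u ∈ Icc a b, f' u ^ 2 ≤ C * f u := by
  have hnhds : f'' ⁻¹' Icc (f'' a / 2) (2 * f'' a) ∈ 𝓝[≥] a :=
    nhdsWithin_le_nhds <| hc.preimage_mem_nhds <| Icc_mem_nhds (by linarith) (by linarith)
  obtain ⟨b, hab, hb⟩ := mem_nhdsGE_iff_exists_Icc_subset.1 hnhds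
  exact ⟨b, hab, _, sq_le_mul_of_second_deriv_mem_Icc hf hf' h0 h1 (half_pos h2)
    fun x hx => hb (Ico_subset_Icc_self hx)⟩

theorem exists_sq_le_mul_on_Icc_left {f f' f'' : ℝ → ℝ} {a : ℝ}
    (hf : ∀ x, HasDerivAt f (f' x) x) (hf' : ∀ x, HasDerivAt f' (f'' x) x)
    (hc : ContinuousAt f'' a) (h0 : f a = 0) (h1 : f' a = 0) (h2 : 0 < f'' a) :
    ∃ b < a, ∃ C, ∀ u ∈ Icc b a, f' u ^ 2 ≤ C * f u := by
  have hf_neg (x : ℝ) : HasDerivAt (fun x => f (-x)) (-f' (-x)) x :=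
    ((hf (-x)).comp x (hasDerivAt_neg x)).congr_deriv (by ring)
  have hf'_neg (x : ℝ) : HasDerivAt (fun x => -f' (-x)) (f'' (-x)) x :=
    ((hf' (-x)).comp x (hasDerivAt_neg x)).neg.congr_deriv (by ring)
  obtain ⟨b, hab, C, hC⟩ := exists_sq_le_mul_on_Icc_right (a := -a) hf_neg hf'_neg
    (hc.comp_of_eq continuous_neg.continuousAt (neg_neg a)) (by simpa using h0) (by simpa using h1)
    (by simpa using h2)
  refine ⟨-b, by linarith, C, fun u hu => ?_⟩
  simpa using hC (-u) ⟨neg_le_neg hu.2, neg_le.1 hu.1⟩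

theorem exists_sq_deriv_le_mul_on_Icc {W : ℝ → ℝ} {a b : ℝ} (hW : ContDiff ℝ 2 W)
    (ha : W a = 0) (hb : W b = 0) (ha' : deriv W a = 0) (hb' : deriv W b = 0)
    (ha'' : 0 < deriv (deriv W) a) (hb'' : 0 < deriv (deriv W) b)
    (hpos : ∀ u ∈ Ioo a b, 0 < W u) :
    ∃ C, ∀ u ∈ Icc a b, deriv W u ^ 2 ≤ C * W u := by
  have hW' : ContDiff ℝ 1 (deriv W) := hW.deriv'
  have hd (x : ℝ) : HasDerivAt W (deriv W x) x :=
    (hW.differentiable two_ne_zero x).hasDerivAt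
  have hd' (x : ℝ) : HasDerivAt (deriv W) (deriv (deriv W) x) x :=
    (hW'.differentiable one_ne_zero x).hasDerivAt
  have hc : Continuous (deriv (deriv W)) := hW'.continuous_deriv le_rfl
  obtain ⟨a', haa', C₁, hC₁⟩ := exists_sq_le_mul_on_Icc_right hd hd' hc.continuousAt ha ha' ha''
  obtain ⟨b', hb'b, C₂, hC₂⟩ := exists_sq_le_mul_on_Icc_left hd hd' hc.continuousAt hb hb' hb''
  have hmid : Icc a' b' ⊆ Ioo a b := Icc_subset_Ioo haa' hb'b
  obtain ⟨K, hK⟩ := isCompact_Icc.exists_bound_of_continuousOn (f := fun u => deriv W u ^ 2 / W u)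
    ((hW'.continuous.pow 2).continuousOn.div hW.continuous.continuousOn
      fun u hu => (hpos u (hmid hu)).ne')
  refine ⟨max C₁ (max C₂ K), fun u hu => ?_⟩
  have hWu : 0 ≤ W u := by
    rcases eq_endpoints_or_mem_Ioo_of_mem_Icc hu with rfl | rfl | hu'
    exacts [ha.ge, hb.ge, (hpos u hu').le]
  rcases le_or_gt u a' with hua' | hua'
  · exact (hC₁ u ⟨hu.1, hua'⟩).trans (by gcongr; exact le_max_left _ _)
  rcases le_or_gt b' u with hub' | hub'
  · exact (hC₂ u ⟨hub', hu.2⟩).trans (by gcongr; exact (le_max_left _ _).trans (le_max_right _ _))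
  have hWu' : 0 < W u := hpos u (hmid ⟨hua'.le, hub'.le⟩)
  have := (le_abs_self _).trans (hK u ⟨hua'.le, hub'.le⟩)
  rw [div_le_iff₀ hWu'] at this
  exact this.trans (by gcongr; exact (le_max_right _ _).trans (le_max_right _ _))

theorem exists_seq_tendsto_atTop_deriv_tendsto_zero {f : ℝ → ℝ} {L : ℝ} (hf : Differentiable ℝ f)
    (hL : Tendsto f atTop (𝓝 L)) :
    ∃ ξ : ℕ → ℝ, Tendsto ξ atTop atTop ∧ Tendsto (fun n => deriv f (ξ n)) atTop (𝓝 0) := by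
  have hmvt (n : ℕ) : ∃ c ∈ Ioo (n : ℝ) (n + 1), deriv f c = (f (n + 1) - f n) / (n + 1 - n) :=
    exists_deriv_eq_slope f (lt_add_one _) hf.continuous.continuousOn
      fun x _ => (hf x).differentiableWithinAt
  choose ξ hξ hξf using hmvt
  have hn : Tendsto (fun n : ℕ => (n : ℝ)) atTop atTop := tendsto_natCast_atTop_atTop
  refine ⟨ξ, tendsto_atTop_mono (fun n => (hξ n).1.le) hn, ?_⟩
  have hdiff : Tendsto (fun n : ℕ => f (n + 1) - f n) atTop (𝓝 (L - L)) :=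
    (hL.comp (tendsto_atTop_add_const_right _ 1 hn)).sub (hL.comp hn)
  simpa [hξf] using hdiff

def drift (q : ℝ → ℝ) (s : ℝ) : ℝ := deriv (deriv q) s / deriv q s

variable {W q : ℝ → ℝ}

namespace StandingWave

theorem hasDerivAt_deriv (hq : StandingWave W q) (s : ℝ) :
    HasDerivAt (deriv q) (deriv W (q s)) s := by
  obtain ⟨hq2, -, -, -, hode, -⟩ := hq
  simpa [hode s] using (hq2.deriv'.differentiable one_ne_zero s).hasDerivAt

theorem deriv_sq_eq (hq : StandingWave W q) (hW : Differentiable ℝ W) (hW1 : W 1 = 0) (s : ℝ) :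
    deriv q s ^ 2 = 2 * W (q s) := by
  have hdq : Differentiable ℝ q := hq.1.differentiable two_ne_zero
  have htop : Tendsto q atTop (𝓝 1) := hq.2.2.2.2.2.1
  set E : ℝ → ℝ := fun s => deriv q s ^ 2 / 2 - W (q s)
  have hE (x : ℝ) : HasDerivAt E 0 x := by
    have := (((hq.hasDerivAt_deriv x).pow 2).div_const 2).sub
      ((hW (q x)).hasDerivAt.comp x (hdq x).hasDerivAt)
    exact this.congr_deriv (by ring)
  have hconst (x : ℝ) : E x = E 0 :=
    is_const_of_deriv_eq_zero (fun x => (hE x).differentiableAt) (fun x => (hE x).deriv) x 0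
  obtain ⟨ξ, hξ, hdξ⟩ := exists_seq_tendsto_atTop_deriv_tendsto_zero hdq htop
  have hEξ : Tendsto (fun n => E (ξ n)) atTop (𝓝 (0 ^ 2 / 2 - W 1)) :=
    ((hdξ.pow 2).div_const 2).sub ((hW.continuous.tendsto 1).comp (htop.comp hξ))
  have hE0 : E 0 = 0 := by simpa [hconst, hW1] using hEξ
  have := hconst s
  simp only [E, hE0] at this
  linarith

theorem deriv_pos (hq : StandingWave W q) (hW : Differentiable ℝ W) (hW1 : W 1 = 0)
    (hWpos : ∀ u ∈ Ioo (-1 : ℝ) 1, 0 < W u) (s : ℝ) : 0 < deriv q s := by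
  refine (hq.2.1.monotone.deriv_nonneg).lt_of_ne fun h => ?_
  have := hq.deriv_sq_eq hW hW1 s
  rw [← h] at this
  linarith [hWpos _ (hq.2.2.1 s)]

theorem hasDerivAt_drift (hq : StandingWave W q) (hW : ContDiff ℝ 2 W)
    (hq' : ∀ s, deriv q s ≠ 0) (s : ℝ) :
    HasDerivAt (drift q) (deriv (deriv W) (q s) - drift q s ^ 2) s := by
  have hW' : Differentiable ℝ (deriv W) := hW.deriv'.differentiable one_ne_zero
  have hdq : Differentiable ℝ q := hq.1.differentiable two_ne_zero
  have := ((hW' (q s)).hasDerivAt.comp s (hdq s).hasDerivAt).div (hq.hasDerivAt_deriv s) (hq' s)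
  have hdrift : drift q = fun s => deriv W (q s) / deriv q s :=
    funext fun s => by rw [drift, hq.2.2.2.2.1 s]
  rw [hdrift]
  refine this.congr_deriv ?_
  simp only [Function.comp_apply]
  rw [sub_div, mul_assoc, ← sq, ← sq, mul_div_cancel_right₀ _ (pow_ne_zero 2 (hq' s)), div_pow]

theorem drift_sq_le (hq : StandingWave W q) (hW : Differentiable ℝ W) (hW1 : W 1 = 0)
    (hWpos : ∀ u ∈ Ioo (-1 : ℝ) 1, 0 < W u) {C : ℝ}
    (hC : ∀ u ∈ Ioo (-1 : ℝ) 1, deriv W u ^ 2 ≤ C * W u) (s : ℝ) :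
    drift q s ^ 2 ≤ C / 2 := by
  have hqs : q s ∈ Ioo (-1 : ℝ) 1 := hq.2.2.1 s
  have hWq : 0 < W (q s) := hWpos _ hqs
  rw [drift, hq.2.2.2.2.1 s, div_pow, hq.deriv_sq_eq hW hW1 s,
    div_le_div_iff₀ (by positivity) two_pos]
  nlinarith [hC _ hqs]

end StandingWave

/-- Proposition C.3: the drift s ↦ q''(s)/q'(s) is bounded and Lipschitz on ℝ. -/
theorem drift_bounded_lipschitz (W q : ℝ → ℝ) (hW : DoubleWell W) (hq : StandingWave W q) :
    (∃ C : ℝ, ∀ s : ℝ, |deriv (deriv q) s / deriv q s| ≤ C) ∧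
    (∃ L : ℝ, ∀ s t : ℝ,
      |deriv (deriv q) s / deriv q s - deriv (deriv q) t / deriv q t| ≤ L * |s - t|) := by
  obtain ⟨hW3, -, hWm1, hW1, hWpos, hW'm1, -, hW'1, -, -, hW''m1, hW''1, -⟩ := hW
  have hW2 : ContDiff ℝ 2 W := hW3.of_le (by norm_num)
  have hdW : Differentiable ℝ W := hW2.differentiable two_ne_zero
  obtain ⟨C, hC⟩ := exists_sq_deriv_le_mul_on_Icc hW2 hWm1 hW1 hW'm1 hW'1 hW''m1 hW''1 hWpos
  obtain ⟨M, hM⟩ := (isCompact_Icc (a := (-1 : ℝ)) (b := 1)).exists_bound_of_continuousOn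
    (hW2.deriv'.continuous_deriv le_rfl).continuousOn
  have hsq := hq.drift_sq_le hdW hW1 hWpos fun u hu => hC u (Ioo_subset_Icc_self hu)
  have hderiv := hq.hasDerivAt_drift hW2 fun s => (hq.deriv_pos hdW hW1 hWpos s).ne'
  refine ⟨⟨√(C / 2), fun s => Real.abs_le_sqrt (hsq s)⟩, M + C / 2, fun s t => ?_⟩
  have hbound (x : ℝ) : ‖deriv (deriv W) (q x) - drift q x ^ 2‖ ≤ M + C / 2 :=
    (norm_sub_le _ _).trans <| add_le_add (hM _ (Ioo_subset_Icc_self (hq.2.2.1 x)))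
      (by simpa using hsq x)
  simpa only [drift, Real.norm_eq_abs] using
    convex_univ.norm_image_sub_le_of_norm_hasDerivWithin_le
      (fun x _ => (hderiv x).hasDerivWithinAt) (fun x _ => hbound x) (mem_univ t) (mem_univ s)

end
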